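/- Suppose a_1, a_2, a_3 are unit vectors in R^3 lying in the plane z = 0 (i.e., third coordinate zero), with weights p_i ≥ 0, Σ_i p_i = 2, Σ_i p_i a_i = 0, and let f(x) = Σ_i p_i Θ(x·a_i). Then f(v_{s_x s_y s_z}) does not depend on s_z, and combined with f(v) = f(-v), there exist at most two distinct values C_1 = f(1,1,±1) and C_2 = f(1,-1,±1) among the eight vertices, satisfying C_1 + C_2 ≤ 2. -/

import Mathlib

/-! Since `Θ(-t) = Θ(t) - t`, the function `f` changes under `x ↦ -x` by `⟪x, ∑ i, p i • a i⟫ = 0`,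
which gives the antipodal symmetry; `s_z` is invisible because every `a i` is orthogonal to the
third axis. At the vertices `(1, ±1, ±1)` the values are `∑ p_i Θ(s_i ± t_i)` with `(s_i, t_i)`
the first two coordinates of `a i`, and `Θ(s + t) + Θ(s - t) ≤ 1 + s` for `|s|, |t| ≤ 1`, so
`C₁ + C₂ ≤ ∑ p_i + ∑ p_i s_i = 2`. -/

open RealInnerProductSpace

/-- The vertex `(s_x, s_y, s_z)` of the cube `[-1,1]^3`, signs encoded by booleans. -/
noncomputable def cubeVtx3 (sx sy sz : Bool) : EuclideanSpace ℝ (Fin 3) :=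
  WithLp.toLp 2 (![if sx then 1 else -1, if sy then 1 else -1, if sz then 1 else -1] : Fin 3 → ℝ)

lemma max_neg_zero_eq (t : ℝ) : max (-t) 0 = max t 0 - t := by
  rcases le_total t 0 with h | h
  · rw [max_eq_left (neg_nonneg.mpr h), max_eq_right h]; ring
  · rw [max_eq_right (neg_nonpos.mpr h), max_eq_left h]; ring

lemma sum_mul_max_inner_neg {E ι : Type*} [NormedAddCommGroup E] [InnerProductSpace ℝ E]
    [Fintype ι] {a : ι → E} {p : ι → ℝ} (hsum : ∑ i, p i • a i = 0) (x : E) :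
    ∑ i, p i * max ⟪-x, a i⟫ 0 = ∑ i, p i * max ⟪x, a i⟫ 0 := by
  have hlin : ∑ i, p i * ⟪x, a i⟫ = 0 := by
    simpa [inner_sum, inner_smul_right] using congrArg (⟪x, ·⟫) hsum
  simp only [inner_neg_left, max_neg_zero_eq, mul_sub, Finset.sum_sub_distrib, hlin, sub_zero]

lemma max_add_zero_add_max_sub_zero_le {s t : ℝ} (hs : |s| ≤ 1) (ht : |t| ≤ 1) :
    max (s + t) 0 + max (s - t) 0 ≤ 1 + s := by
  rw [abs_le] at hs ht
  rcases max_cases (s + t) 0 with ⟨h₁, -⟩ | ⟨h₁, -⟩ <;>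
    rcases max_cases (s - t) 0 with ⟨h₂, -⟩ | ⟨h₂, -⟩ <;> linarith

lemma cubeVtx3_not (sx sy sz : Bool) :
    cubeVtx3 (!sx) (!sy) (!sz) = -cubeVtx3 sx sy sz := by
  ext i
  fin_cases i <;> cases sx <;> cases sy <;> cases sz <;> simp [cubeVtx3]

lemma inner_cubeVtx3_of_apply_two_eq_zero {a : EuclideanSpace ℝ (Fin 3)} (ha : a 2 = 0)
    (sx sy sz : Bool) :
    ⟪cubeVtx3 sx sy sz, a⟫ = (if sx then 1 else -1) * a 0 + (if sy then 1 else -1) * a 1 := by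
  simp [cubeVtx3, PiLp.inner_apply, Fin.sum_univ_three, ha, mul_comm]

lemma cube_vertex_eq_or_eq (F : EuclideanSpace ℝ (Fin 3) → ℝ)
    (hz : ∀ sx sy, F (cubeVtx3 sx sy true) = F (cubeVtx3 sx sy false))
    (hneg : ∀ sx sy sz, F (cubeVtx3 sx sy sz) = F (cubeVtx3 (!sx) (!sy) (!sz)))
    (sx sy sz : Bool) :
    F (cubeVtx3 sx sy sz) = F (cubeVtx3 true true true) ∨
      F (cubeVtx3 sx sy sz) = F (cubeVtx3 true false true) := by
  have hz' : ∀ sy sz, F (cubeVtx3 true sy sz) = F (cubeVtx3 true sy true) := by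
    intro sy sz
    cases sz
    exacts [(hz true sy).symm, rfl]
  cases sx
  · rw [hneg]; cases sy <;> simp [hz']
  · cases sy <;> simp [hz']

theorem planar_povm_two_values
    (a : Fin 3 → EuclideanSpace ℝ (Fin 3)) (p : Fin 3 → ℝ)
    (ha : ∀ i, ‖a i‖ = 1) (haz : ∀ i, a i 2 = 0) (hp : ∀ i, 0 ≤ p i)
    (hp2 : ∑ i, p i = 2) (hsum : ∑ i, p i • a i = 0)
    (f : EuclideanSpace ℝ (Fin 3) → ℝ)
    (hf : ∀ x, f x = ∑ i, p i * max ⟪x, a i⟫ 0) :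
    (∀ sx sy : Bool, f (cubeVtx3 sx sy true) = f (cubeVtx3 sx sy false)) ∧
    (∀ sx sy sz : Bool, f (cubeVtx3 sx sy sz) = f (cubeVtx3 (!sx) (!sy) (!sz))) ∧
    (∀ sx sy sz : Bool, f (cubeVtx3 sx sy sz) = f (cubeVtx3 true true true) ∨
        f (cubeVtx3 sx sy sz) = f (cubeVtx3 true false true)) ∧
    f (cubeVtx3 true true true) + f (cubeVtx3 true false true) ≤ 2 := by
  have hz : ∀ sx sy, f (cubeVtx3 sx sy true) = f (cubeVtx3 sx sy false) := by
    intro sx sy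
    simp only [hf, inner_cubeVtx3_of_apply_two_eq_zero (haz _)]
  have hneg : ∀ sx sy sz, f (cubeVtx3 sx sy sz) = f (cubeVtx3 (!sx) (!sy) (!sz)) := by
    intro sx sy sz
    rw [hf, hf, cubeVtx3_not, sum_mul_max_inner_neg hsum]
  refine ⟨hz, hneg, cube_vertex_eq_or_eq f hz hneg, ?_⟩
  have hsum0 : ∑ i, p i * a i 0 = 0 := by simpa using congrArg (· 0) hsum
  have hcoord : ∀ i j, |a i j| ≤ 1 := fun i j => (ha i).symm ▸ PiLp.norm_apply_le (a i) j
  calc f (cubeVtx3 true true true) + f (cubeVtx3 true false true)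
      = ∑ i, p i * (max (a i 0 + a i 1) 0 + max (a i 0 - a i 1) 0) := by
        simp only [hf, inner_cubeVtx3_of_apply_two_eq_zero (haz _), ← Finset.sum_add_distrib,
          mul_add]
        norm_num [sub_eq_add_neg]
    _ ≤ ∑ i, p i * (1 + a i 0) := by
        refine Finset.sum_le_sum fun i _ => mul_le_mul_of_nonneg_left ?_ (hp i)
        exact max_add_zero_add_max_sub_zero_le (hcoord i 0) (hcoord i 1)
    _ = 2 := by simp only [mul_add, mul_one, Finset.sum_add_distrib, hp2, hsum0, add_zero]
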